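/- A bipartite pure state |ψ⟩_{RS} has Schmidt rank at most r if and only if (Π^A_{R,r+1} ⊗ Π^A_{S,r+1})(|ψ⟩_{RS}^{⊗(r+1)}) = 0, where Π^A_{R,r+1} is the projection onto the antisymmetric subspace of H_R^{⊗(r+1)} (and similarly for S), viewing |ψ⟩^{⊗(r+1)} in (H_R ⊗ H_S)^{⊗(r+1)} ≅ H_R^{⊗(r+1)} ⊗ H_S^{⊗(r+1)}. -/

import Mathlib

/-!
Applying both antisymmetrizers to `ψ^{⊗(r+1)}` gives, at each coordinate `(a, b)`, the double
sum `∑ σ τ, sgn σ sgn τ ∏ k, M (a (σ k)) (b (τ k))`; for fixed `σ` the sum over `τ` is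
`sgn σ · det (M.submatrix a b)`, so the coordinate is a nonzero multiple of an
`(r+1) × (r+1)` minor of `M`. The theorem is then the classical fact that a matrix has rank at
most `r` iff all its `(r+1)`-minors vanish: a nonzero minor forces `r+1` independent rows, and
conversely `r+1` independent rows contain `r+1` independent columns.
-/

open Equiv Module

namespace Matrix

section Field

variable {K : Type*} [Field K] {m n : Type*} [Fintype m] [Fintype n]

theorem exists_linearIndependent_rows_of_le_rank (A : Matrix m n K) {k : ℕ} (hk : k ≤ A.rank) :
    ∃ a : Fin k → m, LinearIndependent K (A.submatrix a id).row := by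
  obtain ⟨κ, a, ha, hspan, hli⟩ := exists_linearIndependent' K A.row
  have : Finite κ := Finite.of_injective a ha
  have : Fintype κ := Fintype.ofFinite κ
  have hcard : A.rank = Fintype.card κ := by
    rw [rank_eq_finrank_span_row, ← hspan, finrank_span_eq_card hli]
  obtain ⟨e⟩ : Nonempty (Fin k ↪ κ) :=
    Function.Embedding.nonempty_of_card_le (by rwa [Fintype.card_fin, ← hcard])
  exact ⟨a ∘ e, hli.comp e e.injective⟩

theorem exists_det_submatrix_ne_zero_of_le_rank (A : Matrix m n K) {k : ℕ}
    (hk : k ≤ A.rank) : ∃ (a : Fin k → m) (b : Fin k → n), (A.submatrix a b).det ≠ 0 := by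
  obtain ⟨a, ha⟩ := A.exists_linearIndependent_rows_of_le_rank hk
  have hrank : k ≤ (A.submatrix a id)ᵀ.rank := by
    rw [rank_transpose, ha.rank_matrix, Fintype.card_fin]
  obtain ⟨b, hb⟩ := (A.submatrix a id)ᵀ.exists_linearIndependent_rows_of_le_rank hrank
  refine ⟨a, b, ?_⟩
  rw [← det_transpose]
  exact (isUnit_iff_isUnit_det _).mp (linearIndependent_rows_iff_isUnit.mp hb) |>.ne_zero

theorem rank_le_iff_forall_det_submatrix_eq_zero (A : Matrix m n K) (r : ℕ) :
    A.rank ≤ r ↔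
      ∀ (a : Fin (r + 1) → m) (b : Fin (r + 1) → n), (A.submatrix a b).det = 0 := by
  constructor
  · intro h a b
    by_contra hdet
    have hsub := A.rank_submatrix_le a b
    rw [rank_of_det_ne_zero hdet, Fintype.card_fin] at hsub
    omega
  · intro h
    by_contra! hlt
    obtain ⟨a, b, hdet⟩ := A.exists_det_submatrix_ne_zero_of_le_rank hlt
    exact hdet (h a b)

end Field

section CommRing

variable {R : Type*} [CommRing R] {ι : Type*} [Fintype ι] [DecidableEq ι]

theorem sum_sign_mul_prod_apply_perm (N : Matrix ι ι R) (σ : Perm ι) :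
    ∑ τ : Perm ι, ((Perm.sign τ : ℤ) : R) * ∏ k, N (σ k) (τ k) =
      ((Perm.sign σ : ℤ) : R) * N.det :=
  calc _ = (N.submatrix σ id)ᵀ.det := by rw [det_apply']; rfl
    _ = _ := by rw [det_transpose, det_permute]

theorem sum_sign_mul_sign_mul_prod_submatrix {m n : Type*} (M : Matrix m n R) (a : ι → m)
    (b : ι → n) :
    ∑ σ : Perm ι, ∑ τ : Perm ι,
        ((Perm.sign σ : ℤ) : R) * ((Perm.sign τ : ℤ) : R) * ∏ k, M (a (σ k)) (b (τ k)) =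
      (Fintype.card ι).factorial * (M.submatrix a b).det := by
  have hsign (σ : Perm ι) : ((Perm.sign σ : ℤ) : R) * ((Perm.sign σ : ℤ) : R) = 1 := by
    rw [← Int.cast_mul, ← Units.val_mul, Int.units_mul_self, Units.val_one, Int.cast_one]
  calc _ = ∑ σ : Perm ι, ((Perm.sign σ : ℤ) : R) *
          ∑ τ : Perm ι, ((Perm.sign τ : ℤ) : R) * ∏ k, M.submatrix a b (σ k) (τ k) := by
        simp only [Finset.mul_sum, mul_assoc, submatrix_apply]
    _ = ∑ _σ : Perm ι, (M.submatrix a b).det := by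
        simp only [sum_sign_mul_prod_apply_perm, ← mul_assoc, hsign, one_mul]
    _ = _ := by
        rw [Finset.sum_const, Finset.card_univ, Fintype.card_perm, nsmul_eq_mul]

end CommRing

end Matrix

-- `ψ^{⊗(r+1)}`, with its `R` factors grouped before its `S` factors, has coordinates
-- `(a, b) ↦ ∏ k, M (a k) (b k)`.
theorem schmidt_rank_le_iff_antisymmetric_projection_vanishes_general
    {dR dS : ℕ} (r : ℕ) (M : Matrix (Fin dR) (Fin dS) ℂ) :
    M.rank ≤ r ↔
      ∀ (a : Fin (r + 1) → Fin dR) (b : Fin (r + 1) → Fin dS),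
        (((r + 1).factorial : ℂ))⁻¹ * (((r + 1).factorial : ℂ))⁻¹ *
          ∑ σ : Equiv.Perm (Fin (r + 1)), ∑ τ : Equiv.Perm (Fin (r + 1)),
            ((Equiv.Perm.sign σ : ℤ) : ℂ) * ((Equiv.Perm.sign τ : ℤ) : ℂ) *
              ∏ k : Fin (r + 1), M (a (σ k)) (b (τ k)) = 0 := by
  have hfac : ((r + 1).factorial : ℂ) ≠ 0 := Nat.cast_ne_zero.mpr (Nat.factorial_ne_zero _)
  simp only [M.rank_le_iff_forall_det_submatrix_eq_zero,
    Matrix.sum_sign_mul_sign_mul_prod_submatrix, Fintype.card_fin, mul_eq_zero, inv_eq_zero,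
    hfac, false_or]

/-- A bipartite pure state `ψ` with coefficient matrix `M` has Schmidt rank at
most `r` iff the product of the two antisymmetrizers on `H_R^{⊗(r+1)}` and
`H_S^{⊗(r+1)}` annihilates `ψ^{⊗(r+1)}`. The tensor power `ψ^{⊗(r+1)}`,
reordered to group the `R` and `S` factors, has coordinates
`(a, b) ↦ ∏ k, M (a k) (b k)`; the condition is stated coordinatewise. -/
theorem schmidt_rank_le_iff_antisymmetric_projection_vanishes
    {dR dS : ℕ} (r : ℕ) (M : Matrix (Fin dR) (Fin dS) ℂ)
    (hψ : ∑ i, ∑ j, Complex.normSq (M i j) = 1) :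
    M.rank ≤ r ↔
      ∀ (a : Fin (r + 1) → Fin dR) (b : Fin (r + 1) → Fin dS),
        (((r + 1).factorial : ℂ))⁻¹ * (((r + 1).factorial : ℂ))⁻¹ *
          ∑ σ : Equiv.Perm (Fin (r + 1)), ∑ τ : Equiv.Perm (Fin (r + 1)),
            ((Equiv.Perm.sign σ : ℤ) : ℂ) * ((Equiv.Perm.sign τ : ℤ) : ℂ) *
              ∏ k : Fin (r + 1), M (a (σ k)) (b (τ k)) = 0 :=
  schmidt_rank_le_iff_antisymmetric_projection_vanishes_general r M
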